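/- Under Assumption (A) (b_{22} > b_{23}, b_{13} > b_{11}, a_{23} > a_{13}) and the coordination conditions, there is no equilibrium of the 3D replicator system in the interior of the face S_{y₁} = {y₁ = 0} of the prism (i.e., no zero with y₁ = 0, 0 < x < 1, 0 < y₂ < 1). -/
import Mathlib


/-- Under Assumption (A) and the coordination conditions, there is no
equilibrium of the 3D replicator system in the interior of the face
`S_{y₁} = {y₁ = 0}` of the prism. -/
theorem stmt18 (a11 a12 a13 a21 a22 a23 b11 b12 b13 b21 b22 b23 : ℝ)
    (h1 : a11 > a21) (h2 : a22 > a12) (h3 : b11 > b12) (h4 : b22 > b21)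
    (hA1 : b22 > b23) (hA2 : b13 > b11) (hA3 : a23 > a13)
    (G : ℝ × ℝ × ℝ → ℝ × ℝ × ℝ)
    (hG : ∀ x y1 y2 : ℝ, G (x, y1, y2) =
      (x * (1 - x) * ((a11 - a21) * y1 + (a12 - a22) * y2 + (a13 - a23) * (1 - y1 - y2)),
       y1 * (((b21 - b23) - ((b21 - b23) + (b13 - b11)) * x) * (1 - y1)
           - ((b22 - b23) - ((b22 - b23) + (b13 - b12)) * x) * y2),
       y2 * (((b22 - b23) - ((b22 - b23) + (b13 - b12)) * x) * (1 - y2)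
           - ((b21 - b23) - ((b21 - b23) + (b13 - b11)) * x) * y1))) :
    ∀ x y2 : ℝ, 0 < x → x < 1 → 0 < y2 → y2 < 1 → G (x, 0, y2) ≠ 0 := by
  intro x y2 hx hx1 hy hy1 hzero
  rw [hG] at hzero
  have h1' := congrArg Prod.fst hzero
  simp only [Prod.fst_zero] at h1'
  have hterm : (a11 - a21) * 0 + (a12 - a22) * y2 + (a13 - a23) * (1 - 0 - y2) < 0 := by
    nlinarith
  have : x * (1 - x) * ((a11 - a21) * 0 + (a12 - a22) * y2 + (a13 - a23) * (1 - 0 - y2)) < 0 := by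
    apply mul_neg_of_pos_of_neg (by nlinarith) hterm
  linarith [h1'.symm ▸ this]
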